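/- arXiv:1102.1831 — 2 statements merged into one kernel-verified Lean document; each statement's English description precedes it below -/
import Mathlib

section
/- In the setting above, let a' < a be consecutive elements of ℤ^n in the order ≤ (i.e., there is no c ∈ ℤ^n with a' < c < a, restricting to elements in a fixed translate of C). Then there is a canonical isomorphism of graded R-modules F^a P / F^{a'} P ≅ T(P)_a ⊗_{R_0} R(-a), natural in P. In particular, this isomorphism does not depend on the choice of splitting σ: if σ and σ' are two degree-preserving splittings of P → T(P), then for x ∈ T(P)_a we have (σ - σ')(x) ∈ PR_+ ⊆ F^{a'} P. -/
/-!
Because `R` lives in degrees with `γ ≥ 0` and `R₊` is generated in degrees with `γ > 0`, the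
degree-`a` part of `PR₊` is a sum of products `r • y` with `r ∈ R₊` and `y` homogeneous of
degree strictly below `a`; as no degree of `P` lies strictly between `a'` and `a`, these `y`
lie in `F^{a'}P`. So `(PR₊)_a ⊆ F^{a'}P`, which gives the independence of `σ` and, through
`x = (x - σπx) + σπx`, the equality `F^a P = F^{a'}P + R·σ(T(P)_a)`.
For the intersection, realise `P` as a graded summand of `⊕ R(-bᵢ)`. Keeping only the coordinates
with `bᵢ = a` and sending the `i`-th basis vector to `σπ` of its image in `P` gives an
`R`-linear endomorphism of `P`. It kills `F^{a'}P`, whose coordinates in those slots would have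
negative degree, and it fixes `σ(T(P)_a)`, because there the dropped coordinates lie in `R₊`
and the kept ones in `R₀`, over which `σ` is linear.
-/

/-- A `ℤⁿ`-graded `R`-module `(P, 𝒬)` is *finitely generated graded projective* if it
is a degree-preserving direct summand of a finite direct sum of shifted copies
`R(-bᵢ)` of `R` (where `R(-b)_a = R_{a-b}`). -/
def IsFGGradedProjective {n : ℕ} {R : Type*} [Ring R] (𝒜 : (Fin n → ℤ) → AddSubgroup R)
    {P : Type*} [AddCommGroup P] [Module R P] (𝒬 : (Fin n → ℤ) → AddSubgroup P) : Prop :=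
  ∃ (m : ℕ) (b : Fin m → (Fin n → ℤ)) (s : P →ₗ[R] (Fin m → R)) (p : (Fin m → R) →ₗ[R] P),
    p.comp s = LinearMap.id ∧
    (∀ (a : Fin n → ℤ) (x : P), x ∈ 𝒬 a → ∀ i, s x i ∈ 𝒜 (a - b i)) ∧
    (∀ (a : Fin n → ℤ) (y : Fin m → R), (∀ i, y i ∈ 𝒜 (a - b i)) → p y ∈ 𝒬 a)

open DirectSum Submodule

theorem Submodule.span_inf_eq_bot_of_eqOn_of_le_ker {R M : Type*} [Ring R] [AddCommGroup M]
    [Module R M] {G : Set M} {K : Submodule R M} (f : M →ₗ[R] M) (hG : Set.EqOn f id G)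
    (hK : K ≤ LinearMap.ker f) : span R G ⊓ K = ⊥ := by
  refine (Submodule.eq_bot_iff _).2 fun y hy => ?_
  obtain ⟨hyG, hyK⟩ := mem_inf.1 hy
  calc y = f y := (LinearMap.eqOn_span' (g := LinearMap.id) hG hyG).symm
    _ = 0 := hK hyK

theorem AddSubgroup.ne_bot_of_mem_of_ne_zero {G : Type*} [AddGroup G] {H : AddSubgroup G} {x : G}
    (hx : x ∈ H) (hx0 : x ≠ 0) : H ≠ ⊥ :=
  fun h => hx0 (AddSubgroup.mem_bot.1 (h ▸ hx))

def degreeCoordinateSum {M R P : Type*} [DecidableEq M] [Ring R] [AddCommGroup P] [Module R P]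
    {m : ℕ} (b : Fin m → M) (a : M) (s : P →ₗ[R] Fin m → R)
    (v : Fin m → P) : P →ₗ[R] P :=
  ∑ i with b i = a, (LinearMap.proj i ∘ₗ s).smulRight (v i)

theorem degreeCoordinateSum_apply {M R P : Type*} [DecidableEq M] [Ring R] [AddCommGroup P]
    [Module R P] {m : ℕ} (b : Fin m → M) (a : M) (s : P →ₗ[R] Fin m → R)
    (v : Fin m → P) (y : P) :
    degreeCoordinateSum b a s v y = ∑ i with b i = a, s y i • v i := by
  simp [degreeCoordinateSum]

def degreeFiltration {M P : Type*} [AddZeroClass M] (R : Type*) [Ring R] [AddCommGroup P]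
    [Module R P] (𝒬 : M → AddSubgroup P) (deg : M →+ ℝ) (a : M) : Submodule R P :=
  span R (⋃ d ∈ {d | deg d ≤ deg a}, (𝒬 d : Set P))

def positiveDegreeIdeal {M R : Type*} [AddZeroClass M] [Ring R] (𝒜 : M → AddSubgroup R)
    (deg : M →+ ℝ) : Ideal R :=
  Ideal.span (⋃ e ∈ {e | 0 < deg e}, (𝒜 e : Set R))

section DegreeFiltration

variable {M R P : Type*} [AddCommGroup M] [Ring R] [AddCommGroup P] [Module R P]
  {𝒜 : M → AddSubgroup R} {𝒬 : M → AddSubgroup P} {deg : M →+ ℝ} {a a' : M}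

local notation "PR₊" => positiveDegreeIdeal 𝒜 deg • (⊤ : Submodule R P)

theorem mem_degreeFiltration {d : M} {x : P} (hx : x ∈ 𝒬 d) (hd : deg d ≤ deg a) :
    x ∈ degreeFiltration R 𝒬 deg a :=
  subset_span (Set.mem_biUnion hd hx)

theorem degreeFiltration_mono (h : deg a' ≤ deg a) :
    degreeFiltration R 𝒬 deg a' ≤ degreeFiltration R 𝒬 deg a :=
  span_mono (Set.biUnion_subset_biUnion_left fun _ hd => le_trans hd h)

theorem nonneg_degree_of_mem (hR : ∀ e, 𝒜 e ≠ ⊥ → 0 ≤ deg e) {e : M} {r : R} (hr : r ∈ 𝒜 e)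
    (hr0 : r ≠ 0) : 0 ≤ deg e :=
  hR e (AddSubgroup.ne_bot_of_mem_of_ne_zero hr hr0)

variable [DecidableEq M]

theorem degreeFiltration_le_ker_degreeCoordinateSum (hR : ∀ e, 𝒜 e ≠ ⊥ → 0 ≤ deg e)
    (hlt : deg a' < deg a) {m : ℕ} {b : Fin m → M} {s : P →ₗ[R] Fin m → R}
    (hs : ∀ (d : M) (x : P), x ∈ 𝒬 d → ∀ i, s x i ∈ 𝒜 (d - b i)) (v : Fin m → P) :
    degreeFiltration R 𝒬 deg a' ≤ LinearMap.ker (degreeCoordinateSum b a s v) := by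
  refine span_le.2 fun x hx => ?_
  obtain ⟨d, hd, hxd⟩ := Set.mem_iUnion₂.mp hx
  have hd : deg d ≤ deg a' := hd
  rw [SetLike.mem_coe, LinearMap.mem_ker, degreeCoordinateSum_apply]
  refine Finset.sum_eq_zero fun i hi => ?_
  obtain rfl : b i = a := (Finset.mem_filter.1 hi).2
  suffices s x i = 0 by rw [this, zero_smul]
  by_contra hsx
  have := nonneg_degree_of_mem hR (hs d x hxd i) hsx
  rw [map_sub] at this
  linarith

theorem degreeCoordinateSum_apply_eq_splitting (hR : ∀ e, 𝒜 e ≠ ⊥ → 0 ≤ deg e)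
    (hinj : Function.Injective deg) {m : ℕ} {b : Fin m → M} (s : P →ₗ[R] Fin m → R)
    (p : (Fin m → R) →ₗ[R] P) (hps : p ∘ₗ s = LinearMap.id)
    (hs : ∀ (d : M) (x : P), x ∈ 𝒬 d → ∀ i, s x i ∈ 𝒜 (d - b i)) (σ : (P ⧸ PR₊) →+ P)
    (hσlin : ∀ r ∈ 𝒜 0, ∀ t, σ (r • t) = r • σ t) {z : P} (hz : z ∈ 𝒬 a) :
    degreeCoordinateSum b a s (fun i => σ ((PR₊).mkQ (p (Pi.single i 1)))) z =
      σ ((PR₊).mkQ z) := by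
  have hcoord_zero : ∀ i, b i = a → s z i ∈ 𝒜 0 := fun i hi => by
    simpa [hi] using hs a z hz i
  have hcoord_pos : ∀ i, b i ≠ a → s z i ∈ positiveDegreeIdeal 𝒜 deg := fun i hi => by
    by_cases h0 : s z i = 0
    · rw [h0]; exact zero_mem _
    have hne : deg (a - b i) ≠ 0 := fun h =>
      hi (sub_eq_zero.1 (hinj (h.trans deg.map_zero.symm))).symm
    exact Ideal.subset_span (Set.mem_biUnion
      (lt_of_le_of_ne (nonneg_degree_of_mem hR (hs a z hz i) h0) hne.symm) (hs a z hz i))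
  have hexpand : z = ∑ i, s z i • p (Pi.single i 1) := by
    conv_lhs => rw [← LinearMap.id_apply (R := R) z, ← hps, LinearMap.comp_apply,
      ← Finset.univ_sum_single (s z), map_sum]
    refine Finset.sum_congr rfl fun i _ => ?_
    rw [← map_smul, ← Pi.single_smul', smul_eq_mul, mul_one]
  have hmod : (PR₊).mkQ (∑ i with b i = a, s z i • p (Pi.single i 1)) = (PR₊).mkQ z := by
    refine ((Submodule.Quotient.eq _).2 ?_).symm
    have hrest : z - ∑ i with b i = a, s z i • p (Pi.single i 1) =
        ∑ i with b i ≠ a, s z i • p (Pi.single i 1) := by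
      rw [sub_eq_iff_eq_add', Finset.sum_filter_add_sum_filter_not]
      exact hexpand
    rw [hrest]
    exact sum_mem fun i hi => smul_mem_smul (hcoord_pos i (Finset.mem_filter.1 hi).2) mem_top
  calc degreeCoordinateSum b a s (fun i => σ ((PR₊).mkQ (p (Pi.single i 1)))) z
      = ∑ i with b i = a, σ ((PR₊).mkQ (s z i • p (Pi.single i 1))) := by
        rw [degreeCoordinateSum_apply]
        refine Finset.sum_congr rfl fun i hi => ?_
        rw [map_smul, hσlin _ (hcoord_zero i (Finset.mem_filter.1 hi).2)]
    _ = σ ((PR₊).mkQ z) := by rw [← map_sum, ← map_sum, hmod]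

theorem span_splitting_inf_degreeFiltration_eq_bot (hR : ∀ e, 𝒜 e ≠ ⊥ → 0 ≤ deg e)
    (hinj : Function.Injective deg) (hlt : deg a' < deg a) {m : ℕ} {b : Fin m → M}
    (s : P →ₗ[R] Fin m → R) (p : (Fin m → R) →ₗ[R] P) (hps : p ∘ₗ s = LinearMap.id)
    (hs : ∀ (d : M) (x : P), x ∈ 𝒬 d → ∀ i, s x i ∈ 𝒜 (d - b i)) (σ : (P ⧸ PR₊) →+ P)
    (hσ : ∀ t, (PR₊).mkQ (σ t) = t) (hσlin : ∀ r ∈ 𝒜 0, ∀ t, σ (r • t) = r • σ t)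
    (hσdeg : ∀ (b : M) (x : P), x ∈ 𝒬 b → σ ((PR₊).mkQ x) ∈ 𝒬 b) :
    span R {y | ∃ x ∈ 𝒬 a, y = σ ((PR₊).mkQ x)} ⊓ degreeFiltration R 𝒬 deg a' = ⊥ := by
  refine Submodule.span_inf_eq_bot_of_eqOn_of_le_ker
    (degreeCoordinateSum b a s fun i => σ ((PR₊).mkQ (p (Pi.single i 1)))) ?_
    (degreeFiltration_le_ker_degreeCoordinateSum hR hlt hs _)
  rintro _ ⟨x, hx, rfl⟩
  rw [degreeCoordinateSum_apply_eq_splitting hR hinj s p hps hs σ hσlin (hσdeg a x hx), hσ]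
  rfl

variable [Decomposition 𝒬] [SetLike.GradedSMul 𝒜 𝒬]

theorem decompose_smul_mem_degreeFiltration
    (hgap : ∀ c, 𝒬 c ≠ ⊥ → deg c < deg a → deg c ≤ deg a') {e c : M} {r : R} {x : P}
    (hr : r ∈ 𝒜 e) (he : 0 < deg e) (hx : x ∈ 𝒬 c) :
    (decompose 𝒬 (r • x) a : P) ∈ degreeFiltration R 𝒬 deg a' := by
  have hrx : r • x ∈ 𝒬 (e + c) := SetLike.GradedSMul.smul_mem hr hx
  by_cases hec : e + c = a
  swap
  · rw [decompose_of_mem_ne 𝒬 hrx hec]; exact zero_mem _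
  rw [← hec, decompose_of_mem_same 𝒬 hrx]
  by_cases hx0 : x = 0
  · simp [hx0]
  have hc : deg c ≤ deg a' := hgap c (AddSubgroup.ne_bot_of_mem_of_ne_zero hx hx0)
    (by rw [← hec, map_add]; linarith)
  exact smul_mem _ r (mem_degreeFiltration hx hc)

variable [GradedRing 𝒜]

theorem mem_closure_of_mem_positiveDegreeIdeal (hR : ∀ e, 𝒜 e ≠ ⊥ → 0 ≤ deg e) {r : R}
    (hr : r ∈ positiveDegreeIdeal 𝒜 deg) :
    r ∈ AddSubgroup.closure (⋃ e ∈ {e | 0 < deg e}, (𝒜 e : Set R)) := by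
  set S := ⋃ e ∈ {e | 0 < deg e}, (𝒜 e : Set R)
  have hmul : ∀ c, ∀ s ∈ AddSubgroup.closure S, c * s ∈ AddSubgroup.closure S := by
    intro c s hs
    induction hs using AddSubgroup.closure_induction with
    | mem s hs =>
      obtain ⟨e, he, hs⟩ := Set.mem_iUnion₂.mp hs
      induction c using DirectSum.Decomposition.inductionOn 𝒜 with
      | zero => simp
      | @homogeneous i c =>
        by_cases hc : (c : R) = 0
        · simp [hc]
        have hdeg : 0 < deg (i + e) := by
          rw [map_add]; linarith [nonneg_degree_of_mem hR c.2 hc, show 0 < deg e from he]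
        exact AddSubgroup.subset_closure (Set.mem_biUnion hdeg (SetLike.mul_mem_graded c.2 hs))
      | add c c' h h' => rw [add_mul]; exact add_mem h h'
    | zero => simp
    | add s s' _ _ h h' => rw [mul_add]; exact add_mem h h'
    | neg s _ h => rw [mul_neg]; exact neg_mem h
  induction hr using Submodule.span_induction with
  | mem x hx => exact AddSubgroup.subset_closure hx
  | zero => exact zero_mem _
  | add _ _ _ _ hx hy => exact add_mem hx hy
  | smul c x _ hx => exact hmul c x hx

theorem decompose_mem_degreeFiltration_of_mem_smul_top (hR : ∀ e, 𝒜 e ≠ ⊥ → 0 ≤ deg e)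
    (hgap : ∀ c, 𝒬 c ≠ ⊥ → deg c < deg a → deg c ≤ deg a') {y : P} (hy : y ∈ PR₊) :
    (decompose 𝒬 y a : P) ∈ degreeFiltration R 𝒬 deg a' := by
  induction hy using Submodule.smul_induction_on' with
  | smul r hr x hx =>
    clear hx
    replace hr := mem_closure_of_mem_positiveDegreeIdeal hR hr
    induction hr using AddSubgroup.closure_induction generalizing x with
    | mem r hr =>
      obtain ⟨e, he, hr⟩ := Set.mem_iUnion₂.mp hr
      induction x using DirectSum.Decomposition.inductionOn 𝒬 with
      | zero => simp
      | homogeneous x => exact decompose_smul_mem_degreeFiltration hgap hr he x.2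
      | add x x' h h' =>
        simpa only [smul_add, decompose_add, DirectSum.add_apply, AddSubgroup.coe_add]
          using add_mem h h'
    | zero => simp
    | add r r' _ _ h h' =>
      simpa only [add_smul, decompose_add, DirectSum.add_apply, AddSubgroup.coe_add]
        using add_mem (h x) (h' x)
    | neg r _ h => rw [neg_smul, ← smul_neg]; exact h (-x)
  | add y _ y' _ h h' =>
    simpa only [decompose_add, DirectSum.add_apply, AddSubgroup.coe_add] using add_mem h h'

theorem mem_degreeFiltration_of_mem_smul_top (hR : ∀ e, 𝒜 e ≠ ⊥ → 0 ≤ deg e)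
    (hgap : ∀ c, 𝒬 c ≠ ⊥ → deg c < deg a → deg c ≤ deg a') {x : P} (hx : x ∈ 𝒬 a)
    (hxR : x ∈ PR₊) : x ∈ degreeFiltration R 𝒬 deg a' :=
  decompose_of_mem_same 𝒬 hx ▸ decompose_mem_degreeFiltration_of_mem_smul_top hR hgap hxR

theorem degreeFiltration_eq_sup_span_splitting (hR : ∀ e, 𝒜 e ≠ ⊥ → 0 ≤ deg e)
    (hgap : ∀ c, 𝒬 c ≠ ⊥ → deg c < deg a → deg c ≤ deg a') (hinj : Function.Injective deg)
    (hlt : deg a' < deg a) (σ : (P ⧸ PR₊) →+ P) (hσ : ∀ t, (PR₊).mkQ (σ t) = t)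
    (hσdeg : ∀ (b : M) (x : P), x ∈ 𝒬 b → σ ((PR₊).mkQ x) ∈ 𝒬 b) :
    degreeFiltration R 𝒬 deg a =
      degreeFiltration R 𝒬 deg a' ⊔ span R {y | ∃ x ∈ 𝒬 a, y = σ ((PR₊).mkQ x)} := by
  refine le_antisymm (span_le.2 fun x hx => ?_)
    (sup_le (degreeFiltration_mono hlt.le) (span_le.2 ?_))
  · obtain ⟨d, hd, hxd⟩ := Set.mem_iUnion₂.mp hx
    by_cases hda' : deg d ≤ deg a'
    · exact mem_sup_left (mem_degreeFiltration hxd hda')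
    by_cases hx0 : x = 0
    · rw [hx0]; exact zero_mem _
    obtain rfl : a = d := hinj (le_antisymm (not_lt.1 fun h =>
      hda' (hgap d (AddSubgroup.ne_bot_of_mem_of_ne_zero hxd hx0) h)) hd)
    have hrest : x - σ ((PR₊).mkQ x) ∈ PR₊ := (Submodule.Quotient.eq _).1 (hσ _).symm
    rw [← sub_add_cancel x (σ ((PR₊).mkQ x))]
    exact add_mem (mem_sup_left (mem_degreeFiltration_of_mem_smul_top hR hgap
      (sub_mem hxd (hσdeg a x hxd)) hrest)) (mem_sup_right (subset_span ⟨x, hxd, rfl⟩))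
  · rintro _ ⟨x, hx, rfl⟩
    exact mem_degreeFiltration (hσdeg a x hx) le_rfl

end DegreeFiltration

theorem consecutive_quotient_canonical_general (n : ℕ)
    (C : Set (Fin n → ℝ))
    (γ : (Fin n → ℝ) →ₗ[ℝ] ℝ)
    (hnonneg : ∀ x ∈ C, 0 ≤ γ x)
    (ι : (Fin n → ℤ) → (Fin n → ℝ)) (hι : ι = fun a i => (a i : ℝ))
    (hinj : Function.Injective (γ ∘ ι))
    -- the graded ring `R` with support in `C`
    (R : Type*) [Ring R] (𝒜 : (Fin n → ℤ) → AddSubgroup R) [GradedRing 𝒜]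
    (hsupp : ∀ a, 𝒜 a ≠ ⊥ → ι a ∈ C)
    (Rplus : Ideal R)
    (hRplus : Rplus = Ideal.span (⋃ a ∈ {a : Fin n → ℤ | 0 < γ (ι a)}, (𝒜 a : Set R)))
    -- a finitely generated graded projective `R`-module `P`, support in `w + C`
    (P : Type*) [AddCommGroup P] [Module R P]
    (𝒬 : (Fin n → ℤ) → AddSubgroup P)
    (hPinternal : DirectSum.IsInternal 𝒬)
    (hPsmul : ∀ (a b : Fin n → ℤ) (r : R) (x : P), r ∈ 𝒜 a → x ∈ 𝒬 b → r • x ∈ 𝒬 (a + b))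
    (hPproj : IsFGGradedProjective 𝒜 𝒬)
    (w : Fin n → ℤ)
    (hPsupp : ∀ c : Fin n → ℤ, 𝒬 c ≠ ⊥ → ι c ∈ (ι w + ·) '' C)
    -- the projection `π : P → T(P) = P/PR₊`
    (π : P →ₗ[R] (P ⧸ (Rplus • (⊤ : Submodule R P))))
    (hπ : π = (Rplus • (⊤ : Submodule R P)).mkQ)
    -- the filtration `F^a P`
    (F : (Fin n → ℤ) → Submodule R P)
    (hF : F = fun a => Submodule.span R
      (⋃ d ∈ {d : Fin n → ℤ | γ (ι d) ≤ γ (ι a)}, (𝒬 d : Set P)))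
    -- consecutive degrees `a' < a` in the translate `w + C`
    (a' a : Fin n → ℤ)
    (hlt : γ (ι a') < γ (ι a))
    (hconsec : ∀ c : Fin n → ℤ, ι c ∈ (ι w + ·) '' C →
      ¬(γ (ι a') < γ (ι c) ∧ γ (ι c) < γ (ι a))) :
    -- independence of the splitting: `(σ - σ')(x) ∈ PR₊ ⊆ F^{a'} P` for `x ∈ T(P)_a`
    (∀ σ σ' : (P ⧸ (Rplus • (⊤ : Submodule R P))) →+ P,
      (∀ t, π (σ t) = t) → (∀ r ∈ 𝒜 0, ∀ t, σ (r • t) = r • σ t) →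
      (∀ (b : Fin n → ℤ) (x : P), x ∈ 𝒬 b → σ (π x) ∈ 𝒬 b) →
      (∀ t, π (σ' t) = t) → (∀ r ∈ 𝒜 0, ∀ t, σ' (r • t) = r • σ' t) →
      (∀ (b : Fin n → ℤ) (x : P), x ∈ 𝒬 b → σ' (π x) ∈ 𝒬 b) →
      ∀ x ∈ 𝒬 a, σ (π x) - σ' (π x) ∈ Rplus • (⊤ : Submodule R P) ∧
        σ (π x) - σ' (π x) ∈ F a') ∧
    -- canonical isomorphism `F^a P / F^{a'} P ≅ T(P)_a ⊗_{R₀} R(-a)`: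
    -- for any degree-preserving splitting `σ`, the summand `span R (σ(T(P)_a))`
    -- lies in `F^a P`, together with `F^{a'} P` it spans `F^a P`, and it meets
    -- `F^{a'} P` trivially
    (∀ σ : (P ⧸ (Rplus • (⊤ : Submodule R P))) →+ P,
      (∀ t, π (σ t) = t) → (∀ r ∈ 𝒜 0, ∀ t, σ (r • t) = r • σ t) →
      (∀ (b : Fin n → ℤ) (x : P), x ∈ 𝒬 b → σ (π x) ∈ 𝒬 b) →
      (∀ x ∈ 𝒬 a, σ (π x) ∈ F a) ∧
      (F a = F a' ⊔ Submodule.span R {p : P | ∃ x ∈ 𝒬 a, p = σ (π x)}) ∧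
      (Submodule.span R {p : P | ∃ x ∈ 𝒬 a, p = σ (π x)} ⊓ F a' = ⊥)) := by
  let : DirectSum.Decomposition 𝒬 := hPinternal.chooseDecomposition
  have : SetLike.GradedSMul 𝒜 𝒬 := ⟨fun i j _ _ hr hx => hPsmul i j _ _ hr hx⟩
  subst hι hRplus hπ hF
  let deg : (Fin n → ℤ) →+ ℝ :=
    γ.toAddMonoidHom.comp (AddMonoidHom.compLeft (Int.castAddHom ℝ) (Fin n))
  have hR : ∀ e, 𝒜 e ≠ ⊥ → 0 ≤ deg e := fun e he => hnonneg _ (hsupp e he)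
  have hgap : ∀ c, 𝒬 c ≠ ⊥ → deg c < deg a → deg c ≤ deg a' := fun c hc hca =>
    not_lt.1 fun hac => hconsec c (hPsupp c hc) ⟨hac, hca⟩
  obtain ⟨m, b, s, p, hps, hs, -⟩ := hPproj
  refine ⟨fun σ σ' hσ _ hσdeg hσ' _ hσ'deg x hx => ?_, fun σ hσ hσlin hσdeg => ⟨?_, ?_, ?_⟩⟩
  · have hdiff : σ (mkQ _ x) - σ' (mkQ _ x) ∈ positiveDegreeIdeal 𝒜 deg • ⊤ :=
      (Submodule.Quotient.eq _).1 ((hσ _).trans (hσ' _).symm)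
    exact ⟨hdiff, mem_degreeFiltration_of_mem_smul_top (deg := deg) hR hgap
      (sub_mem (hσdeg a x hx) (hσ'deg a x hx)) hdiff⟩
  · exact fun x hx => mem_degreeFiltration (deg := deg) (hσdeg a x hx) le_rfl
  · exact degreeFiltration_eq_sup_span_splitting hR hgap hinj hlt σ hσ hσdeg
  · exact span_splitting_inf_degreeFiltration_eq_bot hR hinj hlt s p hps hs σ hσ hσlin hσdeg

/-- Let `a' < a` be consecutive elements of `ℤⁿ` (no `c` with
`a' < c < a` among degrees in the fixed translate `w + C` of the cone containing
the support of `P`).  Then there is a canonical isomorphism of graded `R`-modules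
`F^a P / F^{a'} P ≅ T(P)_a ⊗_{R₀} R(-a)`, natural in `P`: for any degree-preserving
splitting `σ` of `π : P → T(P)` the `R`-span of `σ(T(P)_a)` lands in `F^a P`,
complements `F^{a'} P` inside `F^a P`, and is independent of `σ` modulo `F^{a'} P`;
in particular if `σ, σ'` are two degree-preserving splittings then
`(σ - σ')(x) ∈ PR₊ ⊆ F^{a'} P` for `x ∈ T(P)_a`. -/
theorem consecutive_quotient_canonical (n ℓ : ℕ)
    (vgen : Fin ℓ → (Fin n → ℝ)) (C : Set (Fin n → ℝ))
    (hC : C = {x | ∃ c : Fin ℓ → ℝ, (∀ i, 0 ≤ c i) ∧ x = ∑ i, c i • vgen i})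
    (γ : (Fin n → ℝ) →ₗ[ℝ] ℝ)
    (hnonneg : ∀ x ∈ C, 0 ≤ γ x)
    (hpointed : ∀ x ∈ C, γ x = 0 → x = 0)
    (ι : (Fin n → ℤ) → (Fin n → ℝ)) (hι : ι = fun a i => (a i : ℝ))
    (hinj : Function.Injective (γ ∘ ι))
    -- the graded ring `R` with support in `C`
    (R : Type*) [Ring R] (𝒜 : (Fin n → ℤ) → AddSubgroup R) [GradedRing 𝒜]
    (hsupp : ∀ a, 𝒜 a ≠ ⊥ → ι a ∈ C)
    (Rplus : Ideal R)
    (hRplus : Rplus = Ideal.span (⋃ a ∈ {a : Fin n → ℤ | 0 < γ (ι a)}, (𝒜 a : Set R)))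
    -- a finitely generated graded projective `R`-module `P`, support in `w + C`
    (P : Type*) [AddCommGroup P] [Module R P]
    (𝒬 : (Fin n → ℤ) → AddSubgroup P)
    (hPinternal : DirectSum.IsInternal 𝒬)
    (hPsmul : ∀ (a b : Fin n → ℤ) (r : R) (x : P), r ∈ 𝒜 a → x ∈ 𝒬 b → r • x ∈ 𝒬 (a + b))
    (hPproj : IsFGGradedProjective 𝒜 𝒬)
    (w : Fin n → ℤ)
    (hPsupp : ∀ c : Fin n → ℤ, 𝒬 c ≠ ⊥ → ι c ∈ (ι w + ·) '' C)
    -- the projection `π : P → T(P) = P/PR₊`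
    (π : P →ₗ[R] (P ⧸ (Rplus • (⊤ : Submodule R P))))
    (hπ : π = (Rplus • (⊤ : Submodule R P)).mkQ)
    -- the filtration `F^a P`
    (F : (Fin n → ℤ) → Submodule R P)
    (hF : F = fun a => Submodule.span R
      (⋃ d ∈ {d : Fin n → ℤ | γ (ι d) ≤ γ (ι a)}, (𝒬 d : Set P)))
    -- consecutive degrees `a' < a` in the translate `w + C`
    (a' a : Fin n → ℤ)
    (ha' : ι a' ∈ (ι w + ·) '' C) (ha : ι a ∈ (ι w + ·) '' C)
    (hlt : γ (ι a') < γ (ι a))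
    (hconsec : ∀ c : Fin n → ℤ, ι c ∈ (ι w + ·) '' C →
      ¬(γ (ι a') < γ (ι c) ∧ γ (ι c) < γ (ι a))) :
    -- independence of the splitting: `(σ - σ')(x) ∈ PR₊ ⊆ F^{a'} P` for `x ∈ T(P)_a`
    (∀ σ σ' : (P ⧸ (Rplus • (⊤ : Submodule R P))) →+ P,
      (∀ t, π (σ t) = t) → (∀ r ∈ 𝒜 0, ∀ t, σ (r • t) = r • σ t) →
      (∀ (b : Fin n → ℤ) (x : P), x ∈ 𝒬 b → σ (π x) ∈ 𝒬 b) →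
      (∀ t, π (σ' t) = t) → (∀ r ∈ 𝒜 0, ∀ t, σ' (r • t) = r • σ' t) →
      (∀ (b : Fin n → ℤ) (x : P), x ∈ 𝒬 b → σ' (π x) ∈ 𝒬 b) →
      ∀ x ∈ 𝒬 a, σ (π x) - σ' (π x) ∈ Rplus • (⊤ : Submodule R P) ∧
        σ (π x) - σ' (π x) ∈ F a') ∧
    -- canonical isomorphism `F^a P / F^{a'} P ≅ T(P)_a ⊗_{R₀} R(-a)`:
    -- for any degree-preserving splitting `σ`, the summand `span R (σ(T(P)_a))`
    -- lies in `F^a P`, together with `F^{a'} P` it spans `F^a P`, and it meets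
    -- `F^{a'} P` trivially
    (∀ σ : (P ⧸ (Rplus • (⊤ : Submodule R P))) →+ P,
      (∀ t, π (σ t) = t) → (∀ r ∈ 𝒜 0, ∀ t, σ (r • t) = r • σ t) →
      (∀ (b : Fin n → ℤ) (x : P), x ∈ 𝒬 b → σ (π x) ∈ 𝒬 b) →
      (∀ x ∈ 𝒬 a, σ (π x) ∈ F a) ∧
      (F a = F a' ⊔ Submodule.span R {p : P | ∃ x ∈ 𝒬 a, p = σ (π x)}) ∧
      (Submodule.span R {p : P | ∃ x ∈ 𝒬 a, p = σ (π x)} ⊓ F a' = ⊥)) :=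
  consecutive_quotient_canonical_general n C γ hnonneg ι hι hinj R 𝒜 hsupp Rplus hRplus P 𝒬
    hPinternal hPsmul hPproj w hPsupp π hπ F hF a' a hlt hconsec
end

section
/- Let R be a ℤ^n-graded ring with support in a full-dimensional pointed polyhedral cone C (pointed via γ injective on ℤ^n), v an integral interior point of C, and k ∈ ℕ. Let a_0 < a_1 < ... < a_m be the integer points of -kv + C that are ≤ kv. Then for every finitely generated graded projective R-module P with support contained in -kv + C, F^{-kv}P = 0, and F^{kv}P = P, the functors F^{a_j} form a filtration 0 = F^{a_0}P ⊆ F^{a_1}P ⊆ ... ⊆ F^{a_m}P = P by graded submodules, with successive quotients F^{a_j}P/F^{a_{j-1}}P canonically isomorphic to T(P)_{a_j} ⊗_{R_0} R(-a_j). -/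
/-! The degree-`0` projection `R → R₀` is a ring map, because all weights `γ` of `R` are
nonnegative and `γ` is injective on degrees; `R₊` lies in its kernel. Writing `x = ∑ sᵢ(x) eᵢ`
through the graded splitting `P ⇄ ⊕ᵢ R(-bᵢ)`, a homogeneous `x ∈ P_a` with `π x = 0` therefore has
no coordinate of degree `0`, and all its other coordinates have positive degree, so `x` lies in
`F^{<a}P`. This gives `F^aP = F^{<a}P + R·σ(T(P)_a)` and the independence of `σ`. The sum is direct:
reading off the coordinates of degree `a` and lifting them back through `σ` is a linear map which
is the identity on `R·σ(T(P)_a)` and vanishes on `F^{<a}P`. Finally `F^{<a_j}P = F^{a_{j-1}}P`,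
since no degree of `P` lies strictly between `a_{j-1}` and `a_j`. -/

open DirectSum

section PositiveGrading

variable {ι R : Type*} [AddCommGroup ι] [Ring R] (𝒜 : ι → AddSubgroup R) (g : ι →+ ℝ)

def positiveIdeal : Ideal R :=
  Ideal.span (⋃ a ∈ {a | 0 < g a}, (𝒜 a : Set R))

variable {𝒜 g}

theorem mem_positiveIdeal {e : ι} {r : R} (hr : r ∈ 𝒜 e) (he : 0 < g e) :
    r ∈ positiveIdeal 𝒜 g :=
  Ideal.subset_span (Set.mem_biUnion (x := e) he hr)

theorem nonneg_of_mem_of_ne_zero (hsupp : ∀ e, 𝒜 e ≠ ⊥ → 0 ≤ g e) {e : ι} {r : R}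
    (hr : r ∈ 𝒜 e) (h0 : r ≠ 0) : 0 ≤ g e :=
  hsupp e fun h => h0 (by rwa [h, AddSubgroup.mem_bot] at hr)

theorem pos_of_mem_of_ne_zero (hg : Function.Injective g) (hsupp : ∀ e, 𝒜 e ≠ ⊥ → 0 ≤ g e)
    {e : ι} {r : R} (hr : r ∈ 𝒜 e) (h0 : r ≠ 0) (he : e ≠ 0) : 0 < g e :=
  (nonneg_of_mem_of_ne_zero hsupp hr h0).lt_of_ne fun h => he (hg (by rw [← h, map_zero]))

theorem eq_zero_and_eq_zero_of_add_eq_zero (hg : Function.Injective g)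
    (hsupp : ∀ e, 𝒜 e ≠ ⊥ → 0 ≤ g e) {i j : ι} {c c' : R} (hc : c ∈ 𝒜 i) (hc' : c' ∈ 𝒜 j)
    (h0 : c ≠ 0) (h0' : c' ≠ 0) (hij : i + j = 0) : i = 0 ∧ j = 0 := by
  have hi := nonneg_of_mem_of_ne_zero hsupp hc h0
  have hj := nonneg_of_mem_of_ne_zero hsupp hc' h0'
  have hsum : g i + g j = 0 := by rw [← map_add, hij, map_zero]
  exact ⟨hg (by rw [map_zero]; linarith), hg (by rw [map_zero]; linarith)⟩

variable [DecidableEq ι] [GradedRing 𝒜]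

/-- The projection `R → R₀` onto degree `0`: it is multiplicative because two nonzero homogeneous
elements of nonnegative weight can only multiply into degree `0` if both have degree `0`. -/
def projZeroRingHomOfNonneg (hg : Function.Injective g)
    (hsupp : ∀ e, 𝒜 e ≠ ⊥ → 0 ≤ g e) : R →+* R where
  toFun r := decompose 𝒜 r 0
  map_one' := decompose_of_mem_same 𝒜 SetLike.GradedOne.one_mem
  map_zero' := by simp
  map_add' _ _ := by simp
  map_mul' := by
    refine DirectSum.Decomposition.inductionOn 𝒜 (fun x => by simp) ?_ ?_
    · rintro i ⟨c, hc⟩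
      refine DirectSum.Decomposition.inductionOn 𝒜 (by simp) ?_ ?_
      · rintro j ⟨c', hc'⟩
        simp only
        by_cases hzero : c = 0 ∨ c' = 0
        · rcases hzero with rfl | rfl <;> simp
        push Not at hzero
        by_cases hij : i + j = 0
        · obtain ⟨rfl, rfl⟩ :=
            eq_zero_and_eq_zero_of_add_eq_zero hg hsupp hc hc' hzero.1 hzero.2 hij
          rw [decompose_of_mem_same 𝒜 hc, decompose_of_mem_same 𝒜 hc',
            decompose_of_mem_same 𝒜 (add_zero (0 : ι) ▸ SetLike.GradedMul.mul_mem hc hc')]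
        · rw [decompose_of_mem_ne 𝒜 (SetLike.GradedMul.mul_mem hc hc') hij]
          rcases show i ≠ 0 ∨ j ≠ 0 by grind with h | h
          · simp only [decompose_of_mem_ne 𝒜 hc h, zero_mul]
          · simp only [decompose_of_mem_ne 𝒜 hc' h, mul_zero]
      · intro _ _ hd he
        simp only [mul_add, decompose_add, DirectSum.add_apply, AddMemClass.coe_add, hd, he]
    · rintro _ _ ha hb _
      simp only [add_mul, decompose_add, DirectSum.add_apply, AddMemClass.coe_add, ha, hb]

theorem positiveIdeal_le_ker (hg : Function.Injective g) (hsupp : ∀ e, 𝒜 e ≠ ⊥ → 0 ≤ g e) :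
    positiveIdeal 𝒜 g ≤ RingHom.ker (projZeroRingHomOfNonneg hg hsupp) := by
  refine Ideal.span_le.mpr fun r hr => ?_
  obtain ⟨a, ha, hra⟩ := Set.mem_iUnion₂.mp hr
  refine decompose_of_mem_ne 𝒜 hra fun h => ?_
  rw [h, Set.mem_ofPred_eq, map_zero] at ha
  exact lt_irrefl _ ha

theorem projZeroRingHomOfNonneg_apply_of_mem_zero (hg : Function.Injective g)
    (hsupp : ∀ e, 𝒜 e ≠ ⊥ → 0 ≤ g e) {r : R} (hr : r ∈ 𝒜 0) :
    projZeroRingHomOfNonneg hg hsupp r = r :=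
  decompose_of_mem_same 𝒜 hr

end PositiveGrading

theorem apply_mem_ker_of_mem_smul_top {R S M : Type*} [Ring R] [Semiring S] [AddCommGroup M]
    [Module R M] {f : R →+* S} {I : Ideal R} (hI : I ≤ RingHom.ker f) (φ : M →ₗ[R] R) {w : M}
    (hw : w ∈ I • (⊤ : Submodule R M)) : f (φ w) = 0 := by
  suffices I • (⊤ : Submodule R M) ≤ Submodule.comap φ (RingHom.ker f) from this hw
  refine Submodule.smul_le.mpr fun r hr x _ => ?_
  simp [RingHom.mem_ker.mp (hI hr)]

section HomogeneousSpan

variable {ι P : Type*} (R : Type*) [Ring R] [AddCommGroup P] [Module R P]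
  (𝒬 : ι → AddSubgroup P)

def homogeneousSpan (S : Set ι) : Submodule R P :=
  Submodule.span R (⋃ d ∈ S, (𝒬 d : Set P))

variable {R 𝒬}

theorem mem_homogeneousSpan {S : Set ι} {d : ι} (hd : d ∈ S) {x : P} (hx : x ∈ 𝒬 d) :
    x ∈ homogeneousSpan R 𝒬 S :=
  Submodule.subset_span (Set.mem_biUnion hd hx)

theorem homogeneousSpan_le {S : Set ι} {N : Submodule R P} (h : ∀ d ∈ S, ∀ x ∈ 𝒬 d, x ∈ N) :
    homogeneousSpan R 𝒬 S ≤ N :=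
  Submodule.span_le.mpr <| Set.iUnion₂_subset h

theorem homogeneousSpan_mono {S S' : Set ι} (h : S ⊆ S') :
    homogeneousSpan R 𝒬 S ≤ homogeneousSpan R 𝒬 S' :=
  homogeneousSpan_le fun _ hd _ hx => mem_homogeneousSpan (h hd) hx

theorem homogeneousSpan_lt_eq_le {g : ι → ℝ} {a a' : ι} (hlt : g a' < g a)
    (hgap : ∀ d, 𝒬 d ≠ ⊥ → g d < g a → g d ≤ g a') :
    homogeneousSpan R 𝒬 {d | g d < g a} = homogeneousSpan R 𝒬 {d | g d ≤ g a'} := by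
  refine le_antisymm (homogeneousSpan_le fun d hd x hx => ?_)
    (homogeneousSpan_mono fun d hd => lt_of_le_of_lt hd hlt)
  by_cases hbot : 𝒬 d = ⊥
  · rw [hbot, AddSubgroup.mem_bot] at hx
    exact hx ▸ Submodule.zero_mem _
  · exact mem_homogeneousSpan (S := {d | g d ≤ g a'}) (hgap d hbot hd) hx

end HomogeneousSpan

section GradedSplitting

variable {ι R P : Type*} [AddCommGroup ι] [Ring R] [AddCommGroup P] [Module R P]

/-- The data of `IsFGGradedProjective`, over an arbitrary grading group. -/
structure GradedSplitting (𝒜 : ι → AddSubgroup R) (𝒬 : ι → AddSubgroup P) where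
  m : ℕ
  b : Fin m → ι
  s : P →ₗ[R] (Fin m → R)
  p : (Fin m → R) →ₗ[R] P
  p_comp_s : p ∘ₗ s = LinearMap.id
  s_mem : ∀ (a : ι) (x : P), x ∈ 𝒬 a → ∀ i, s x i ∈ 𝒜 (a - b i)
  p_mem : ∀ (a : ι) (y : Fin m → R), (∀ i, y i ∈ 𝒜 (a - b i)) → p y ∈ 𝒬 a

theorem IsFGGradedProjective.nonempty_gradedSplitting {n : ℕ} {𝒜 : (Fin n → ℤ) → AddSubgroup R}
    {𝒬 : (Fin n → ℤ) → AddSubgroup P} (h : IsFGGradedProjective 𝒜 𝒬) :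
    Nonempty (GradedSplitting 𝒜 𝒬) :=
  let ⟨m, b, s, p, hps, hs, hp⟩ := h
  ⟨⟨m, b, s, p, hps, hs, hp⟩⟩

namespace GradedSplitting

variable {𝒜 : ι → AddSubgroup R} {𝒬 : ι → AddSubgroup P} {g : ι →+ ℝ}

def gen (D : GradedSplitting 𝒜 𝒬) (i : Fin D.m) : P :=
  D.p (Pi.single i 1)

theorem eq_sum_smul_gen (D : GradedSplitting 𝒜 𝒬) (x : P) : x = ∑ i, D.s x i • D.gen i := by
  conv_lhs => rw [← LinearMap.id_apply (R := R) x, ← D.p_comp_s, LinearMap.comp_apply,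
    ← (Pi.basisFun R (Fin D.m)).sum_repr (D.s x), map_sum]
  simp only [Pi.basisFun_repr, Pi.basisFun_apply, map_smul, gen]

theorem s_apply_eq_zero_of_mem_homogeneousSpan_lt (D : GradedSplitting 𝒜 𝒬)
    (hsupp : ∀ e, 𝒜 e ≠ ⊥ → 0 ≤ g e) {i : Fin D.m} {z : P}
    (hz : z ∈ homogeneousSpan R 𝒬 {d | g d < g (D.b i)}) : D.s z i = 0 := by
  suffices homogeneousSpan R 𝒬 {d | g d < g (D.b i)} ≤ LinearMap.ker (LinearMap.proj i ∘ₗ D.s)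
    from this hz
  refine homogeneousSpan_le fun d hd x hx => ?_
  by_contra hne
  have hd' : g d < g (D.b i) := hd
  have := nonneg_of_mem_of_ne_zero hsupp (D.s_mem d x hx i) hne
  rw [map_sub] at this
  linarith

theorem apply_eq_sum_of_mem [DecidableEq ι] {Q : Type*} [AddCommGroup Q] [Module R Q]
    {π : P →ₗ[R] Q} (D : GradedSplitting 𝒜 𝒬) (hg : Function.Injective g)
    (hsupp : ∀ e, 𝒜 e ≠ ⊥ → 0 ≤ g e) (hπ : positiveIdeal 𝒜 g • ⊤ ≤ LinearMap.ker π) {a : ι}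
    {y : P} (hy : y ∈ 𝒬 a) :
    π y = ∑ i with D.b i = a, D.s y i • π (D.gen i) := by
  conv_lhs => rw [D.eq_sum_smul_gen y, map_sum]
  rw [Finset.sum_filter]
  refine Finset.sum_congr rfl fun i _ => ?_
  split_ifs with hbi
  · rw [map_smul]
  by_cases h0 : D.s y i = 0
  · simp [h0]
  have hpos := pos_of_mem_of_ne_zero hg hsupp (D.s_mem a y hy i) h0
    (sub_ne_zero.mpr (Ne.symm hbi))
  exact hπ (Submodule.smul_mem_smul (mem_positiveIdeal (D.s_mem a y hy i) hpos) Submodule.mem_top)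

theorem span_inf_homogeneousSpan_lt_eq_bot [DecidableEq ι] {Q : Type*} [AddCommGroup Q]
    [Module R Q] {π : P →ₗ[R] Q} (D : GradedSplitting 𝒜 𝒬) (hg : Function.Injective g)
    (hsupp : ∀ e, 𝒜 e ≠ ⊥ → 0 ≤ g e) (hπ : positiveIdeal 𝒜 g • ⊤ ≤ LinearMap.ker π)
    (σ : Q →+ P) (hσ : ∀ t, π (σ t) = t) (hσ0 : ∀ r ∈ 𝒜 0, ∀ t, σ (r • t) = r • σ t)
    (hσ𝒬 : ∀ (b : ι) (x : P), x ∈ 𝒬 b → σ (π x) ∈ 𝒬 b) (a : ι) :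
    Submodule.span R {q | ∃ x ∈ 𝒬 a, q = σ (π x)} ⊓ homogeneousSpan R 𝒬 {d | g d < g a} = ⊥ := by
  let Φ : P →ₗ[R] P :=
    ∑ i with D.b i = a, (LinearMap.proj i ∘ₗ D.s).smulRight (σ (π (D.gen i)))
  have hΦ : ∀ z, Φ z = ∑ i with D.b i = a, D.s z i • σ (π (D.gen i)) := fun z => by simp [Φ]
  have hfix : Submodule.span R {q | ∃ x ∈ 𝒬 a, q = σ (π x)} ≤ LinearMap.eqLocus Φ LinearMap.id := by
    refine Submodule.span_le.mpr ?_
    rintro _ ⟨x, hx, rfl⟩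
    have hy := hσ𝒬 a x hx
    calc Φ (σ (π x)) = σ (∑ i with D.b i = a, D.s (σ (π x)) i • π (D.gen i)) := by
          rw [hΦ, map_sum]
          refine Finset.sum_congr rfl fun i hi => (hσ0 _ ?_ _).symm
          simpa [(Finset.mem_filter.mp hi).2] using D.s_mem a _ hy i
      _ = σ (π x) := by rw [← D.apply_eq_sum_of_mem hg hsupp hπ hy, hσ]
  have hkill : homogeneousSpan R 𝒬 {d | g d < g a} ≤ LinearMap.ker Φ := fun z hz => by
    rw [LinearMap.mem_ker, hΦ]
    refine Finset.sum_eq_zero fun i hi => ?_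
    rw [← (Finset.mem_filter.mp hi).2] at hz
    rw [D.s_apply_eq_zero_of_mem_homogeneousSpan_lt hsupp hz, zero_smul]
  refine eq_bot_iff.mpr fun z hz => ?_
  calc z = Φ z := (hfix hz.1).symm
    _ = 0 := hkill hz.2

variable [DecidableEq ι] [GradedRing 𝒜]

theorem gen_mem (D : GradedSplitting 𝒜 𝒬) (i : Fin D.m) : D.gen i ∈ 𝒬 (D.b i) := by
  refine D.p_mem _ _ fun j => ?_
  by_cases hji : j = i
  · subst hji
    simpa using SetLike.GradedOne.one_mem (A := 𝒜)
  · rw [Pi.single_eq_of_ne hji]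
    exact zero_mem _

theorem mem_homogeneousSpan_lt_of_mem_smul_top (D : GradedSplitting 𝒜 𝒬)
    (hg : Function.Injective g) (hsupp : ∀ e, 𝒜 e ≠ ⊥ → 0 ≤ g e) {a : ι} {w : P}
    (hw : w ∈ 𝒬 a) (hwI : w ∈ positiveIdeal 𝒜 g • (⊤ : Submodule R P)) :
    w ∈ homogeneousSpan R 𝒬 {d | g d < g a} := by
  rw [D.eq_sum_smul_gen w]
  refine Submodule.sum_mem _ fun i _ => ?_
  by_cases h0 : D.s w i = 0
  · simp [h0]
  by_cases hbi : D.b i = a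
  · -- a coordinate of degree `0` of an element of `R₊P` lies in `ker(R → R₀) ∩ R₀ = 0`
    subst hbi
    have hdeg0 : D.s w i ∈ 𝒜 0 := by simpa using D.s_mem _ w hw i
    have hker := apply_mem_ker_of_mem_smul_top (positiveIdeal_le_ker hg hsupp)
      (LinearMap.proj i ∘ₗ D.s) hwI
    rw [LinearMap.comp_apply, LinearMap.proj_apply,
      projZeroRingHomOfNonneg_apply_of_mem_zero hg hsupp hdeg0] at hker
    exact absurd hker h0
  · have hpos := pos_of_mem_of_ne_zero hg hsupp (D.s_mem a w hw i) h0
      (sub_ne_zero.mpr (Ne.symm hbi))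
    rw [map_sub, sub_pos] at hpos
    refine Submodule.smul_mem _ _ ?_
    exact mem_homogeneousSpan (S := {d | g d < g a}) hpos (D.gen_mem i)

variable {Q : Type*} [AddCommGroup Q] [Module R Q] {π : P →ₗ[R] Q}

theorem sub_mem_homogeneousSpan_lt_of_apply_eq (D : GradedSplitting 𝒜 𝒬)
    (hg : Function.Injective g) (hsupp : ∀ e, 𝒜 e ≠ ⊥ → 0 ≤ g e)
    (hπ : LinearMap.ker π ≤ positiveIdeal 𝒜 g • ⊤) {a : ι} {x y : P} (hx : x ∈ 𝒬 a)
    (hy : y ∈ 𝒬 a) (hxy : π x = π y) : x - y ∈ homogeneousSpan R 𝒬 {d | g d < g a} :=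
  D.mem_homogeneousSpan_lt_of_mem_smul_top hg hsupp (sub_mem hx hy)
    (hπ (by rw [LinearMap.mem_ker, map_sub, hxy, sub_self]))

theorem homogeneousSpan_le_eq_sup (D : GradedSplitting 𝒜 𝒬) (hg : Function.Injective g)
    (hsupp : ∀ e, 𝒜 e ≠ ⊥ → 0 ≤ g e) (hπ : LinearMap.ker π ≤ positiveIdeal 𝒜 g • ⊤)
    (σ : Q →+ P) (hσ : ∀ t, π (σ t) = t) (hσ𝒬 : ∀ (b : ι) (x : P), x ∈ 𝒬 b → σ (π x) ∈ 𝒬 b)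
    (a : ι) :
    homogeneousSpan R 𝒬 {d | g d ≤ g a} =
      homogeneousSpan R 𝒬 {d | g d < g a} ⊔ Submodule.span R {q | ∃ x ∈ 𝒬 a, q = σ (π x)} := by
  refine le_antisymm (homogeneousSpan_le fun d hd x hx => ?_) (sup_le ?_ ?_)
  · rcases (show g d ≤ g a from hd).lt_or_eq with hlt | heq
    · exact Submodule.mem_sup_left (mem_homogeneousSpan (S := {d | g d < g a}) hlt hx)
    obtain rfl := hg heq
    rw [← sub_add_cancel x (σ (π x))]
    exact add_mem
      (Submodule.mem_sup_left (D.sub_mem_homogeneousSpan_lt_of_apply_eq hg hsupp hπ hx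
        (hσ𝒬 d x hx) (hσ _).symm))
      (Submodule.mem_sup_right (Submodule.subset_span ⟨x, hx, rfl⟩))
  · exact homogeneousSpan_mono fun d (hd : g d < g a) => hd.le
  · refine Submodule.span_le.mpr ?_
    rintro _ ⟨x, hx, rfl⟩
    exact mem_homogeneousSpan (S := {d | g d ≤ g a}) (le_refl (g a)) (hσ𝒬 a x hx)

end GradedSplitting

end GradedSplitting

theorem exists_nonneg_smul_eq_sum {ℓ : ℕ} {E : Type*} [AddCommMonoid E] [Module ℝ E]
    {vgen : Fin ℓ → E} {t : ℝ} (ht : 0 ≤ t) {x : E}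
    (hx : ∃ c : Fin ℓ → ℝ, (∀ i, 0 ≤ c i) ∧ x = ∑ i, c i • vgen i) :
    ∃ c : Fin ℓ → ℝ, (∀ i, 0 ≤ c i) ∧ t • x = ∑ i, c i • vgen i := by
  obtain ⟨c, hc, rfl⟩ := hx
  exact ⟨t • c, fun i => mul_nonneg ht (hc i), by simp [Finset.smul_sum, smul_smul]⟩

theorem filtration_with_canonical_quotients_general (n ℓ : ℕ)
    (vgen : Fin ℓ → (Fin n → ℝ)) (C : Set (Fin n → ℝ))
    (hC : C = {x | ∃ c : Fin ℓ → ℝ, (∀ i, 0 ≤ c i) ∧ x = ∑ i, c i • vgen i})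
    (γ : (Fin n → ℝ) →ₗ[ℝ] ℝ)
    (hnonneg : ∀ x ∈ C, 0 ≤ γ x)
    (ι : (Fin n → ℤ) → (Fin n → ℝ)) (hι : ι = fun a i => (a i : ℝ))
    (hinj : Function.Injective (γ ∘ ι))
    -- `v` an integral interior point, `k ∈ ℕ`, and the window of integer points
    (v : Fin n → ℤ) (hv : ι v ∈ interior C) (k : ℕ)
    (m : ℕ) (lst : Fin (m + 1) → (Fin n → ℤ))
    (hmono : StrictMono (fun j => γ (ι (lst j))))
    (h0 : lst 0 = -(k : ℤ) • v)
    (hrange : Set.range lst = {a : Fin n → ℤ | ι a ∈ (ι (-(k : ℤ) • v) + ·) '' C ∧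
      γ (ι a) ≤ γ (ι ((k : ℤ) • v))})
    -- the graded ring `R` with support in `C`
    (R : Type*) [Ring R] (𝒜 : (Fin n → ℤ) → AddSubgroup R) [GradedRing 𝒜]
    (hsupp : ∀ a, 𝒜 a ≠ ⊥ → ι a ∈ C)
    (Rplus : Ideal R)
    (hRplus : Rplus = Ideal.span (⋃ a ∈ {a : Fin n → ℤ | 0 < γ (ι a)}, (𝒜 a : Set R)))
    -- a finitely generated graded projective `R`-module `P` in `𝔓gr_k(R)`
    (P : Type*) [AddCommGroup P] [Module R P]
    (𝒬 : (Fin n → ℤ) → AddSubgroup P)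
    (hPproj : IsFGGradedProjective 𝒜 𝒬)
    (hPsupp : ∀ c : Fin n → ℤ, 𝒬 c ≠ ⊥ → ι c ∈ (ι (-(k : ℤ) • v) + ·) '' C)
    -- the filtration `F^a P` and the hypotheses `F^{-kv}P = 0`, `F^{kv}P = P`
    (F : (Fin n → ℤ) → Submodule R P)
    (hF : F = fun a => Submodule.span R
      (⋃ d ∈ {d : Fin n → ℤ | γ (ι d) ≤ γ (ι a)}, (𝒬 d : Set P)))
    (hFbot : F (-(k : ℤ) • v) = ⊥)
    (hFtop : F ((k : ℤ) • v) = ⊤)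
    -- the projection `π : P → T(P) = P/PR₊`
    (π : P →ₗ[R] (P ⧸ (Rplus • (⊤ : Submodule R P))))
    (hπ : π = (Rplus • (⊤ : Submodule R P)).mkQ) :
    -- the filtration: `0 = F^{a₀}P ⊆ F^{a₁}P ⊆ … ⊆ F^{a_m}P = P`
    (∀ j j' : Fin (m + 1), j ≤ j' → F (lst j) ≤ F (lst j')) ∧
    F (lst 0) = ⊥ ∧ F (lst (Fin.last m)) = ⊤ ∧
    -- canonical isomorphisms `F^{a_j}P/F^{a_{j-1}}P ≅ T(P)_{a_j} ⊗_{R₀} R(-a_j)`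
    (∀ j : Fin m,
      ∀ σ : (P ⧸ (Rplus • (⊤ : Submodule R P))) →+ P,
        (∀ t, π (σ t) = t) → (∀ r ∈ 𝒜 0, ∀ t, σ (r • t) = r • σ t) →
        (∀ (b : Fin n → ℤ) (x : P), x ∈ 𝒬 b → σ (π x) ∈ 𝒬 b) →
        (∀ x ∈ 𝒬 (lst j.succ), σ (π x) ∈ F (lst j.succ)) ∧
        (F (lst j.succ) = F (lst j.castSucc) ⊔
          Submodule.span R {p : P | ∃ x ∈ 𝒬 (lst j.succ), p = σ (π x)}) ∧
        (Submodule.span R {p : P | ∃ x ∈ 𝒬 (lst j.succ), p = σ (π x)} ⊓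
          F (lst j.castSucc) = ⊥) ∧
        -- independence of `σ`: any two splittings agree modulo `F^{a_{j-1}}P`
        (∀ σ' : (P ⧸ (Rplus • (⊤ : Submodule R P))) →+ P,
          (∀ t, π (σ' t) = t) → (∀ r ∈ 𝒜 0, ∀ t, σ' (r • t) = r • σ' t) →
          (∀ (b : Fin n → ℤ) (x : P), x ∈ 𝒬 b → σ' (π x) ∈ 𝒬 b) →
          ∀ x ∈ 𝒬 (lst j.succ), σ (π x) - σ' (π x) ∈ F (lst j.castSucc))) := by
  subst hι hπ
  let g : (Fin n → ℤ) →+ ℝ := γ.toAddMonoidHom.comp ((Int.castAddHom ℝ).compLeft (Fin n))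
  have hsuppg : ∀ e, 𝒜 e ≠ ⊥ → 0 ≤ g e := fun e he => hnonneg _ (hsupp e he)
  have hFg : ∀ a, F a = homogeneousSpan R 𝒬 {d | g d ≤ g a} := fun a => by rw [hF]; rfl
  obtain rfl : Rplus = positiveIdeal 𝒜 g := hRplus
  obtain ⟨D⟩ := hPproj.nonempty_gradedSplitting
  have hkv : (k : ℤ) • v ∈ Set.range lst := by
    have hvC : (fun i => (v i : ℝ)) ∈ C := interior_subset hv
    rw [hC] at hvC
    rw [hrange, hC]
    refine ⟨⟨_, exists_nonneg_smul_eq_sum (t := 2 * k) (by positivity) hvC, ?_⟩, le_rfl⟩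
    funext i
    simp only [Pi.add_apply, Pi.smul_apply, smul_eq_mul, Int.cast_mul, Int.cast_neg,
      Int.cast_natCast]
    ring
  have hlst_le : ∀ j, g (lst j) ≤ g ((k : ℤ) • v) := fun j => (hrange.le ⟨j, rfl⟩).2
  have hgap : ∀ j : Fin m, ∀ d, 𝒬 d ≠ ⊥ → g d < g (lst j.succ) → g d ≤ g (lst j.castSucc) := by
    intro j d hd hlt
    obtain ⟨j', rfl⟩ : d ∈ Set.range lst :=
      hrange.ge ⟨hPsupp d hd, (hlt.trans_le (hlst_le j.succ)).le⟩
    exact hmono.monotone (Fin.le_castSucc_iff.mpr (hmono.lt_iff_lt.mp hlt))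
  have hker := Submodule.ker_mkQ (positiveIdeal 𝒜 g • (⊤ : Submodule R P))
  refine ⟨fun j j' hjj' => ?_, h0 ▸ hFbot, ?_, fun j σ hσ hσ0 hσ𝒬 => ?_⟩
  · rw [hFg, hFg]
    exact homogeneousSpan_mono fun d (hd : g d ≤ _) => hd.trans (hmono.monotone hjj')
  · obtain ⟨jt, hjt⟩ := hkv
    rw [eq_top_iff, ← hFtop, ← hjt, hFg, hFg]
    exact homogeneousSpan_mono fun d (hd : g d ≤ _) => hd.trans (hmono.monotone (Fin.le_last jt))
  · rw [hFg, hFg, ← homogeneousSpan_lt_eq_le (g := g) (hmono Fin.castSucc_lt_succ) (hgap j)]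
    exact ⟨fun x hx => mem_homogeneousSpan (S := {d | g d ≤ g (lst j.succ)})
        (le_refl (g (lst j.succ))) (hσ𝒬 _ x hx),
      D.homogeneousSpan_le_eq_sup hinj hsuppg hker.le σ hσ hσ𝒬 _,
      D.span_inf_homogeneousSpan_lt_eq_bot hinj hsuppg hker.ge σ hσ hσ0 hσ𝒬 _,
      fun σ' hσ' _ hσ'𝒬 x hx => D.sub_mem_homogeneousSpan_lt_of_apply_eq hinj hsuppg hker.le
        (hσ𝒬 _ x hx) (hσ'𝒬 _ x hx) (by rw [hσ, hσ'])⟩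

/-- Let `R` be a `ℤⁿ`-graded ring with support in a full-dimensional
pointed polyhedral cone `C`, `v` an integral interior point of `C`, `k ∈ ℕ`, and
`a₀ < a₁ < … < a_m` the integer points of `-kv + C` that are `≤ kv`.  For every
finitely generated graded projective `R`-module `P` with support in `-kv + C`,
`F^{-kv}P = 0` and `F^{kv}P = P`, the submodules `F^{a_j}P` form a filtration
`0 = F^{a₀}P ⊆ F^{a₁}P ⊆ … ⊆ F^{a_m}P = P`, with successive quotients
`F^{a_j}P/F^{a_{j-1}}P` canonically isomorphic to `T(P)_{a_j} ⊗_{R₀} R(-a_j)`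
(for any degree-preserving splitting `σ` of `π : P → T(P)`, the summand
`span R σ(T(P)_{a_j})` complements `F^{a_{j-1}}P` in `F^{a_j}P`, independently of
`σ` modulo `F^{a_{j-1}}P`). -/
theorem filtration_with_canonical_quotients (n ℓ : ℕ)
    (vgen : Fin ℓ → (Fin n → ℝ)) (C : Set (Fin n → ℝ))
    (hC : C = {x | ∃ c : Fin ℓ → ℝ, (∀ i, 0 ≤ c i) ∧ x = ∑ i, c i • vgen i})
    (γ : (Fin n → ℝ) →ₗ[ℝ] ℝ)
    (hnonneg : ∀ x ∈ C, 0 ≤ γ x)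
    (hpointed : ∀ x ∈ C, γ x = 0 → x = 0)
    (ι : (Fin n → ℤ) → (Fin n → ℝ)) (hι : ι = fun a i => (a i : ℝ))
    (hinj : Function.Injective (γ ∘ ι))
    -- `v` an integral interior point, `k ∈ ℕ`, and the window of integer points
    (v : Fin n → ℤ) (hv : ι v ∈ interior C) (k : ℕ)
    (m : ℕ) (lst : Fin (m + 1) → (Fin n → ℤ))
    (hmono : StrictMono (fun j => γ (ι (lst j))))
    (h0 : lst 0 = -(k : ℤ) • v)
    (hrange : Set.range lst = {a : Fin n → ℤ | ι a ∈ (ι (-(k : ℤ) • v) + ·) '' C ∧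
      γ (ι a) ≤ γ (ι ((k : ℤ) • v))})
    -- the graded ring `R` with support in `C`
    (R : Type*) [Ring R] (𝒜 : (Fin n → ℤ) → AddSubgroup R) [GradedRing 𝒜]
    (hsupp : ∀ a, 𝒜 a ≠ ⊥ → ι a ∈ C)
    (Rplus : Ideal R)
    (hRplus : Rplus = Ideal.span (⋃ a ∈ {a : Fin n → ℤ | 0 < γ (ι a)}, (𝒜 a : Set R)))
    -- a finitely generated graded projective `R`-module `P` in `𝔓gr_k(R)`
    (P : Type*) [AddCommGroup P] [Module R P]
    (𝒬 : (Fin n → ℤ) → AddSubgroup P)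
    (hPinternal : DirectSum.IsInternal 𝒬)
    (hPsmul : ∀ (a b : Fin n → ℤ) (r : R) (x : P), r ∈ 𝒜 a → x ∈ 𝒬 b → r • x ∈ 𝒬 (a + b))
    (hPproj : IsFGGradedProjective 𝒜 𝒬)
    (hPsupp : ∀ c : Fin n → ℤ, 𝒬 c ≠ ⊥ → ι c ∈ (ι (-(k : ℤ) • v) + ·) '' C)
    -- the filtration `F^a P` and the hypotheses `F^{-kv}P = 0`, `F^{kv}P = P`
    (F : (Fin n → ℤ) → Submodule R P)
    (hF : F = fun a => Submodule.span R
      (⋃ d ∈ {d : Fin n → ℤ | γ (ι d) ≤ γ (ι a)}, (𝒬 d : Set P)))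
    (hFbot : F (-(k : ℤ) • v) = ⊥)
    (hFtop : F ((k : ℤ) • v) = ⊤)
    -- the projection `π : P → T(P) = P/PR₊`
    (π : P →ₗ[R] (P ⧸ (Rplus • (⊤ : Submodule R P))))
    (hπ : π = (Rplus • (⊤ : Submodule R P)).mkQ) :
    -- the filtration: `0 = F^{a₀}P ⊆ F^{a₁}P ⊆ … ⊆ F^{a_m}P = P`
    (∀ j j' : Fin (m + 1), j ≤ j' → F (lst j) ≤ F (lst j')) ∧
    F (lst 0) = ⊥ ∧ F (lst (Fin.last m)) = ⊤ ∧
    -- canonical isomorphisms `F^{a_j}P/F^{a_{j-1}}P ≅ T(P)_{a_j} ⊗_{R₀} R(-a_j)`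
    (∀ j : Fin m,
      ∀ σ : (P ⧸ (Rplus • (⊤ : Submodule R P))) →+ P,
        (∀ t, π (σ t) = t) → (∀ r ∈ 𝒜 0, ∀ t, σ (r • t) = r • σ t) →
        (∀ (b : Fin n → ℤ) (x : P), x ∈ 𝒬 b → σ (π x) ∈ 𝒬 b) →
        (∀ x ∈ 𝒬 (lst j.succ), σ (π x) ∈ F (lst j.succ)) ∧
        (F (lst j.succ) = F (lst j.castSucc) ⊔
          Submodule.span R {p : P | ∃ x ∈ 𝒬 (lst j.succ), p = σ (π x)}) ∧
        (Submodule.span R {p : P | ∃ x ∈ 𝒬 (lst j.succ), p = σ (π x)} ⊓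
          F (lst j.castSucc) = ⊥) ∧
        -- independence of `σ`: any two splittings agree modulo `F^{a_{j-1}}P`
        (∀ σ' : (P ⧸ (Rplus • (⊤ : Submodule R P))) →+ P,
          (∀ t, π (σ' t) = t) → (∀ r ∈ 𝒜 0, ∀ t, σ' (r • t) = r • σ' t) →
          (∀ (b : Fin n → ℤ) (x : P), x ∈ 𝒬 b → σ' (π x) ∈ 𝒬 b) →
          ∀ x ∈ 𝒬 (lst j.succ), σ (π x) - σ' (π x) ∈ F (lst j.castSucc))) :=
  filtration_with_canonical_quotients_general n ℓ vgen C hC γ hnonneg ι hι hinj v hv k m lst hmono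
    h0 hrange R 𝒜 hsupp Rplus hRplus P 𝒬 hPproj hPsupp F hF hFbot hFtop π hπ
end
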